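/- In ℤ⟨X₅⟩, the additive group W₂ generated by all [x_{i₁},x_{i₂},x_{i₃},x_{i₄},x_{i₅}] and [x_{i₁},x_{i₂},x_{i₃}][x_{i₄},x_{i₅}], over permutations (i₁,...,i₅) of (1,...,5), is free abelian with basis the union of: (1) all [x₅, x_{i₁}, x_{i₂}, x_{i₃}, x_{i₄}] with {i₁,...,i₄} = {1,2,3,4}; (2) all [x_{i₁},x_{i₂},x_{i₃}][x₅,x_{i₄}] with {i₁,...,i₄} = {1,2,3,4}, i₁ > i₂ and i₁ > i₃; (3) all [x_{i₁},x_{i₂}][x₅,x_{i₃},x_{i₄}] with {i₁,...,i₄} = {1,2,3,4} and i₁ > i₂. -/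

import Mathlib

/-!
Write `f = x₅` and let `a, b, c, d` be `x₁, …, x₄` in some order.

Independence: every basis element has a leading word, `f a b c d`, `a b c f d` or `a b f c d` for
the families (1), (2), (3), whose coefficient is `1` in it and `0` in every other basis element of
the same family or of a later one in the order (1), (3), (2); the side conditions `i₁ > i₂, i₃` and
`i₁ > i₂` are what kill the competing terms inside a family. So the coefficient functionals pair
unitriangularly with the basis.

Spanning: antisymmetry and the Jacobi identity move `f` to the front of a left-normed commutator.
In a product `[a,b,c][d,f]` the Jacobi identity makes the largest index lead; if `f` sits in the
3-commutator, `u[c,d] = [c,d]u + [[u,c],d] - [[u,d],c]` turns the product into family (3) plus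
long commutators. The same identity, read backwards, shows that family (3) lies in `W₂`.
-/

noncomputable section

/-- `ℤ⟨X₅⟩`, the free unital associative ring on `{x₁,…,x₅}` (indexed by `Fin 5`). -/
abbrev R5 : Type := FreeAlgebra ℤ (Fin 5)

/-- The commutator `[a,b] = ab - ba`. -/
def br (a b : R5) : R5 := a * b - b * a

/-- The free generators `x₁,…,x₅` (as `x 0, …, x 4`). -/
def x (i : Fin 5) : R5 := FreeAlgebra.ι ℤ i

/-- The generators `x₁,…,x₄`, embedded via `Fin 4 → Fin 5`. -/
def e (i : Fin 4) : R5 := x i.castSucc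

/-- `W₂` as a `ℤ`-submodule: generated by all `[x_{i₁},x_{i₂},x_{i₃},x_{i₄},x_{i₅}]` and
`[x_{i₁},x_{i₂},x_{i₃}][x_{i₄},x_{i₅}]` over permutations `(i₁,…,i₅)` of `(1,…,5)`. -/
def W2 : Submodule ℤ R5 := Submodule.span ℤ
  ({y | ∃ σ : Equiv.Perm (Fin 5),
      y = br (br (br (br (x (σ 0)) (x (σ 1))) (x (σ 2))) (x (σ 3))) (x (σ 4))} ∪
   {y | ∃ σ : Equiv.Perm (Fin 5),
      y = br (br (x (σ 0)) (x (σ 1))) (x (σ 2)) * br (x (σ 3)) (x (σ 4))})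

/-- The index type of the claimed basis: permutations `(i₁,…,i₄)` of `(1,…,4)`, for
family (1) unrestricted, for family (2) with `i₁ > i₂` and `i₁ > i₃`, and for
family (3) with `i₁ > i₂`. -/
abbrev Idx : Type :=
  Equiv.Perm (Fin 4) ⊕
  {σ : Equiv.Perm (Fin 4) // σ 1 < σ 0 ∧ σ 2 < σ 0} ⊕
  {σ : Equiv.Perm (Fin 4) // σ 1 < σ 0}

/-- The claimed basis elements. -/
def bElt : Idx → R5
  | Sum.inl σ => br (br (br (br (x 4) (e (σ 0))) (e (σ 1))) (e (σ 2))) (e (σ 3))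
  | Sum.inr (Sum.inl σ) => br (br (e (σ.1 0)) (e (σ.1 1))) (e (σ.1 2)) * br (x 4) (e (σ.1 3))
  | Sum.inr (Sum.inr σ) => br (e (σ.1 0)) (e (σ.1 1)) * br (br (x 4) (e (σ.1 2))) (e (σ.1 3))


theorem Fin.insertNth_last_castSucc_injective {n : ℕ} (p : Fin (n + 1)) {g : Fin n → Fin n}
    (hg : Function.Injective g) :
    Function.Injective (Fin.insertNth p (Fin.last n) (Fin.castSucc ∘ g)) := by
  intro i j hij
  induction i using Fin.succAboveCases p <;> induction j using Fin.succAboveCases p <;>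
    simp_all [Fin.castSucc_ne_last, (Fin.castSucc_ne_last _).symm, hg.eq_iff]

theorem Equiv.Perm.exists_eq_insertNth_last_castSucc {n : ℕ} (σ : Equiv.Perm (Fin (n + 1))) :
    ∃ (p : Fin (n + 1)) (g : Fin n → Fin n), Function.Injective g ∧
      ⇑σ = Fin.insertNth p (Fin.last n) (Fin.castSucc ∘ g) := by
  set p := σ.symm (Fin.last n)
  have hne : ∀ i, σ (p.succAbove i) ≠ Fin.last n := fun i h =>
    Fin.succAbove_ne p i (σ.injective (h.trans (σ.apply_symm_apply _).symm))
  have hg : Fin.castSucc ∘ (fun i => (σ (p.succAbove i)).castPred (hne i)) = σ ∘ p.succAbove :=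
    funext fun i => Fin.castSucc_castPred _ _
  refine ⟨p, fun i => (σ (p.succAbove i)).castPred (hne i), ?_, ?_⟩
  · refine Function.Injective.of_comp (f := Fin.castSucc) ?_
    rw [hg]
    exact σ.injective.comp Fin.succAbove_right_injective
  · rw [hg, ← σ.apply_symm_apply (Fin.last n)]
    exact (Fin.insertNth_self_removeNth p σ).symm

theorem Equiv.Perm.eq_iff_fin_four {τ τ' : Equiv.Perm (Fin 4)} :
    τ = τ' ↔ τ 0 = τ' 0 ∧ τ 1 = τ' 1 ∧ τ 2 = τ' 2 ∧ τ 3 = τ' 3 := by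
  simp [Equiv.ext_iff, Fin.forall_fin_succ]

theorem LinearIndependent.of_triangular {ι R M α : Type*} [DecidableEq ι] [Ring R]
    [AddCommGroup M] [Module R M] [LinearOrder α] [WellFoundedLT α] (v : ι → M)
    (φ : ι → M →ₗ[R] R) (rank : ι → α)
    (h : ∀ i j, rank i ≤ rank j → φ i (v j) = if i = j then 1 else 0) :
    LinearIndependent R v := by
  rw [linearIndependent_iff']
  intro s g hg
  suffices ∀ a, ∀ i ∈ s, rank i = a → g i = 0 from fun i hi => this _ i hi rfl
  intro a
  induction a using WellFoundedLT.induction with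
  | _ a ih =>
    rintro i hi rfl
    have hφ := congrArg (φ i) hg
    rw [map_sum, map_zero, Finset.sum_eq_single_of_mem i hi] at hφ
    · simpa [h i i le_rfl] using hφ
    · intro j hj hji
      rcases lt_or_ge (rank j) (rank i) with hlt | hle
      · simp [ih _ hlt j hj rfl]
      · simp [h i j hle, hji.symm]

theorem FreeAlgebra.basisFreeMonoid_apply (R X : Type*) [CommSemiring R] (w : FreeMonoid X) :
    FreeAlgebra.basisFreeMonoid R X w = FreeMonoid.lift (FreeAlgebra.ι R) w := by
  simp [FreeAlgebra.basisFreeMonoid, FreeAlgebra.equivMonoidAlgebraFreeMonoid]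

section LieIdentities

variable {L : Type*} [LieRing L]

theorem lie_lie_eq_sub (a b f : L) : ⁅⁅a, b⁆, f⁆ = ⁅⁅f, b⁆, a⁆ - ⁅⁅f, a⁆, b⁆ := by
  rw [lie_lie, ← lie_skew f b, ← lie_skew f a, neg_lie, neg_lie, ← lie_skew ⁅b, f⁆,
    ← lie_skew ⁅a, f⁆]
  abel

theorem lie_lie_right (u a b : L) : ⁅u, ⁅a, b⁆⁆ = ⁅⁅u, a⁆, b⁆ - ⁅⁅u, b⁆, a⁆ := by
  rw [leibniz_lie, ← lie_skew ⁅u, b⁆ a]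
  abel

theorem lie_lie_lie_right (u a b c : L) : ⁅u, ⁅⁅a, b⁆, c⁆⁆ =
    ⁅⁅⁅u, a⁆, b⁆, c⁆ - ⁅⁅⁅u, b⁆, a⁆, c⁆ - ⁅⁅⁅u, c⁆, a⁆, b⁆ + ⁅⁅⁅u, c⁆, b⁆, a⁆ := by
  rw [lie_lie_right, lie_lie_right, lie_lie_right, sub_lie]
  abel

theorem lie_lie_lie_eq (a b c f : L) : ⁅⁅⁅a, b⁆, c⁆, f⁆ =
    -⁅⁅⁅f, a⁆, b⁆, c⁆ + ⁅⁅⁅f, b⁆, a⁆, c⁆ + ⁅⁅⁅f, c⁆, a⁆, b⁆ - ⁅⁅⁅f, c⁆, b⁆, a⁆ := by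
  rw [lie_lie_eq_sub ⁅a, b⁆ c f, lie_lie_right ⁅f, c⁆ a b, lie_lie_right f a b, sub_lie]
  abel

theorem lie_lie_lie_lie_eq (a b c d f : L) : ⁅⁅⁅⁅a, b⁆, c⁆, d⁆, f⁆ =
    -⁅⁅⁅⁅f, a⁆, b⁆, c⁆, d⁆ + ⁅⁅⁅⁅f, b⁆, a⁆, c⁆, d⁆ + ⁅⁅⁅⁅f, c⁆, a⁆, b⁆, d⁆
      - ⁅⁅⁅⁅f, c⁆, b⁆, a⁆, d⁆ + ⁅⁅⁅⁅f, d⁆, a⁆, b⁆, c⁆ - ⁅⁅⁅⁅f, d⁆, b⁆, a⁆, c⁆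
      - ⁅⁅⁅⁅f, d⁆, c⁆, a⁆, b⁆ + ⁅⁅⁅⁅f, d⁆, c⁆, b⁆, a⁆ := by
  rw [lie_lie_eq_sub ⁅⁅a, b⁆, c⁆ d f, lie_lie_lie_right ⁅f, d⁆ a b c, ← lie_skew f ⁅⁅a, b⁆, c⁆,
    lie_lie_lie_eq a b c f]
  simp only [add_lie, sub_lie, neg_lie]
  abel

end LieIdentities

theorem mul_eq_mul_add_lie {A : Type*} [Ring A] (a b : A) : a * b = b * a + ⁅a, b⁆ := by
  rw [Ring.lie_def]
  abel

section Independence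

theorem castSucc_ne_four (i : Fin 4) : (i.castSucc : Fin 5) ≠ 4 := Fin.castSucc_ne_last i

theorem four_ne_castSucc (i : Fin 4) : (4 : Fin 5) ≠ i.castSucc :=
  (Fin.castSucc_ne_last i).symm

-- Bundled only additively: as a `ℤ`-linear map it would be linear for `Algebra.toModule`, not for
-- the `ℤ`-module structure that `LinearIndependent ℤ bElt` refers to.
def wordCoeff (w : List (Fin 5)) : R5 →+ ℤ :=
  ((FreeAlgebra.basisFreeMonoid ℤ (Fin 5)).coord (FreeMonoid.ofList w)).toAddMonoidHom

theorem wordCoeff_x_mul (w : List (Fin 5)) (i j k l m : Fin 5) :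
    wordCoeff w (x i * (x j * (x k * (x l * x m)))) = if [i, j, k, l, m] = w then 1 else 0 := by
  classical
  have : x i * (x j * (x k * (x l * x m))) =
      FreeAlgebra.basisFreeMonoid ℤ (Fin 5) (FreeMonoid.ofList [i, j, k, l, m]) := by
    simp [FreeAlgebra.basisFreeMonoid_apply, x]
  rw [this, wordCoeff, LinearMap.toAddMonoidHom_coe, Module.Basis.coord_apply,
    Module.Basis.repr_self, Finsupp.single_apply]
  exact if_congr FreeMonoid.ofList.apply_eq_iff_eq rfl rfl

def leadingWord : Idx → List (Fin 5)
  | .inl τ => [4, (τ 0).castSucc, (τ 1).castSucc, (τ 2).castSucc, (τ 3).castSucc]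
  | .inr (.inl τ) => [(τ.1 0).castSucc, (τ.1 1).castSucc, (τ.1 2).castSucc, 4, (τ.1 3).castSucc]
  | .inr (.inr τ) => [(τ.1 0).castSucc, (τ.1 1).castSucc, 4, (τ.1 2).castSucc, (τ.1 3).castSucc]

def familyRank : Idx → ℕ
  | .inl _ => 0
  | .inr (.inl _) => 2
  | .inr (.inr _) => 1

theorem wordCoeff_leadingWord_bElt (i j : Idx) (hij : familyRank i ≤ familyRank j) :
    wordCoeff (leadingWord i) (bElt j) = if i = j then 1 else 0 := by
  rcases i with τ | ⟨τ, hτ⟩ | ⟨τ, hτ⟩ <;> rcases j with τ' | ⟨τ', hτ'⟩ | ⟨τ', hτ'⟩ <;>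
    simp only [familyRank] at hij <;> try omega
  all_goals
    simp only [leadingWord, bElt, br, e, sub_mul, mul_sub, mul_assoc, map_sub, wordCoeff_x_mul]
    simp only [List.cons.injEq, Fin.castSucc_inj, castSucc_ne_four, four_ne_castSucc, and_true,
      true_and, false_and, and_false, and_self, if_false, sub_zero, sub_self, reduceCtorEq,
      Sum.inl.injEq, Sum.inr.injEq, Subtype.mk.injEq, Equiv.Perm.eq_iff_fin_four]
  all_goals split_ifs <;> omega

theorem linearIndependent_bElt : LinearIndependent ℤ bElt :=
  .of_triangular bElt (fun i => (wordCoeff (leadingWord i)).toIntLinearMap) familyRank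
    wordCoeff_leadingWord_bElt

end Independence

section Span

attribute [local instance] LieRing.ofAssociativeRing

theorem x_four_lie_mem {g : Fin 4 → Fin 4} (hg : Function.Injective g) :
    ⁅⁅⁅⁅x 4, e (g 0)⁆, e (g 1)⁆, e (g 2)⁆, e (g 3)⁆ ∈ Submodule.span ℤ (Set.range bElt) :=
  Submodule.subset_span ⟨.inl (Equiv.ofBijective g hg.bijective_of_finite), rfl⟩

theorem lie_lie_mul_x_four_mem_of_lt {g : Fin 4 → Fin 4} (hg : Function.Injective g)
    (h₁ : g 1 < g 0) (h₂ : g 2 < g 0) :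
    ⁅⁅e (g 0), e (g 1)⁆, e (g 2)⁆ * ⁅x 4, e (g 3)⁆ ∈ Submodule.span ℤ (Set.range bElt) :=
  Submodule.subset_span ⟨.inr (.inl ⟨Equiv.ofBijective g hg.bijective_of_finite, h₁, h₂⟩), rfl⟩

theorem lie_mul_x_four_lie_mem_of_lt {g : Fin 4 → Fin 4} (hg : Function.Injective g)
    (h : g 1 < g 0) :
    ⁅e (g 0), e (g 1)⁆ * ⁅⁅x 4, e (g 2)⁆, e (g 3)⁆ ∈ Submodule.span ℤ (Set.range bElt) :=
  Submodule.subset_span ⟨.inr (.inr ⟨Equiv.ofBijective g hg.bijective_of_finite, h⟩), rfl⟩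

theorem lie_lie_mul_x_four_mem {g : Fin 4 → Fin 4} (hg : Function.Injective g) :
    ⁅⁅e (g 0), e (g 1)⁆, e (g 2)⁆ * ⁅x 4, e (g 3)⁆ ∈ Submodule.span ℤ (Set.range bElt) := by
  have h₀₁ := hg.ne (show (0 : Fin 4) ≠ 1 by decide)
  have h₀₂ := hg.ne (show (0 : Fin 4) ≠ 2 by decide)
  have h₁₂ := hg.ne (show (1 : Fin 4) ≠ 2 by decide)
  obtain h | h | h : (g 1 < g 0 ∧ g 2 < g 0) ∨ (g 0 < g 1 ∧ g 2 < g 1) ∨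
      (g 0 < g 2 ∧ g 1 < g 2) := by omega
  · exact lie_lie_mul_x_four_mem_of_lt hg h.1 h.2
  · rw [← lie_skew (e (g 0)), neg_lie, neg_mul]
    exact neg_mem (lie_lie_mul_x_four_mem_of_lt (g := g ∘ ![1, 0, 2, 3]) (hg.comp (by decide))
      h.1 h.2)
  · rw [lie_lie_eq_sub (e (g 0)) (e (g 1)) (e (g 2)), sub_mul]
    exact sub_mem
      (lie_lie_mul_x_four_mem_of_lt (g := g ∘ ![2, 1, 0, 3]) (hg.comp (by decide)) h.2 h.1)
      (lie_lie_mul_x_four_mem_of_lt (g := g ∘ ![2, 0, 1, 3]) (hg.comp (by decide)) h.1 h.2)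

theorem lie_mul_x_four_lie_mem {g : Fin 4 → Fin 4} (hg : Function.Injective g) :
    ⁅e (g 0), e (g 1)⁆ * ⁅⁅x 4, e (g 2)⁆, e (g 3)⁆ ∈ Submodule.span ℤ (Set.range bElt) := by
  rcases (hg.ne (show (0 : Fin 4) ≠ 1 by decide)).lt_or_gt with h | h
  · rw [← lie_skew, neg_mul]
    exact neg_mem (lie_mul_x_four_lie_mem_of_lt (g := g ∘ ![1, 0, 2, 3]) (hg.comp (by decide)) h)
  · exact lie_mul_x_four_lie_mem_of_lt hg h

theorem x_four_lie_mul_lie_mem {g : Fin 4 → Fin 4} (hg : Function.Injective g) :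
    ⁅⁅x 4, e (g 0)⁆, e (g 1)⁆ * ⁅e (g 2), e (g 3)⁆ ∈ Submodule.span ℤ (Set.range bElt) := by
  rw [mul_eq_mul_add_lie, lie_lie_right]
  exact add_mem (lie_mul_x_four_lie_mem (g := g ∘ ![2, 3, 0, 1]) (hg.comp (by decide)))
    (sub_mem (x_four_lie_mem hg) (x_four_lie_mem (g := g ∘ ![0, 1, 3, 2]) (hg.comp (by decide))))

theorem lie_lie_lie_lie_mem (σ : Equiv.Perm (Fin 5)) :
    ⁅⁅⁅⁅x (σ 0), x (σ 1)⁆, x (σ 2)⁆, x (σ 3)⁆, x (σ 4)⁆ ∈ Submodule.span ℤ (Set.range bElt) := by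
  obtain ⟨p, g, hg, hσ⟩ := σ.exists_eq_insertNth_last_castSucc
  rw [hσ]
  fin_cases p
  · exact x_four_lie_mem hg
  · show ⁅⁅⁅⁅e (g 0), x 4⁆, e (g 1)⁆, e (g 2)⁆, e (g 3)⁆ ∈ _
    rw [← lie_skew (e (g 0)), neg_lie, neg_lie, neg_lie]
    exact neg_mem (x_four_lie_mem hg)
  · show ⁅⁅⁅⁅e (g 0), e (g 1)⁆, x 4⁆, e (g 2)⁆, e (g 3)⁆ ∈ _
    rw [lie_lie_eq_sub (e (g 0)) (e (g 1)) (x 4), sub_lie, sub_lie]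
    exact sub_mem (x_four_lie_mem (g := g ∘ ![1, 0, 2, 3]) (hg.comp (by decide)))
      (x_four_lie_mem hg)
  · show ⁅⁅⁅⁅e (g 0), e (g 1)⁆, e (g 2)⁆, x 4⁆, e (g 3)⁆ ∈ _
    rw [lie_lie_lie_eq (e (g 0)) (e (g 1)) (e (g 2)) (x 4)]
    simp only [add_lie, sub_lie, neg_lie]
    refine sub_mem (add_mem (add_mem (neg_mem ?_) ?_) ?_) ?_ <;>
      exact x_four_lie_mem (g := g ∘ ![_, _, _, _]) (hg.comp (by decide))
  · show ⁅⁅⁅⁅e (g 0), e (g 1)⁆, e (g 2)⁆, e (g 3)⁆, x 4⁆ ∈ _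
    rw [lie_lie_lie_lie_eq]
    refine add_mem (sub_mem (sub_mem (add_mem (sub_mem (add_mem (add_mem (neg_mem ?_) ?_) ?_)
      ?_) ?_) ?_) ?_) ?_ <;>
      exact x_four_lie_mem (g := g ∘ ![_, _, _, _]) (hg.comp (by decide))

theorem lie_lie_mul_lie_mem (σ : Equiv.Perm (Fin 5)) :
    ⁅⁅x (σ 0), x (σ 1)⁆, x (σ 2)⁆ * ⁅x (σ 3), x (σ 4)⁆ ∈ Submodule.span ℤ (Set.range bElt) := by
  obtain ⟨p, g, hg, hσ⟩ := σ.exists_eq_insertNth_last_castSucc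
  rw [hσ]
  fin_cases p
  · exact x_four_lie_mul_lie_mem hg
  · show ⁅⁅e (g 0), x 4⁆, e (g 1)⁆ * ⁅e (g 2), e (g 3)⁆ ∈ _
    rw [← lie_skew (e (g 0)), neg_lie, neg_mul]
    exact neg_mem (x_four_lie_mul_lie_mem hg)
  · show ⁅⁅e (g 0), e (g 1)⁆, x 4⁆ * ⁅e (g 2), e (g 3)⁆ ∈ _
    rw [lie_lie_eq_sub (e (g 0)) (e (g 1)) (x 4), sub_mul]
    exact sub_mem (x_four_lie_mul_lie_mem (g := g ∘ ![1, 0, 2, 3]) (hg.comp (by decide)))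
      (x_four_lie_mul_lie_mem hg)
  · exact lie_lie_mul_x_four_mem hg
  · show ⁅⁅e (g 0), e (g 1)⁆, e (g 2)⁆ * ⁅e (g 3), x 4⁆ ∈ _
    rw [← lie_skew (e (g 3)), mul_neg]
    exact neg_mem (lie_lie_mul_x_four_mem hg)

theorem lie_lie_lie_lie_mem_W2 (v : Fin 5 → Fin 5) (hv : Function.Injective v) :
    ⁅⁅⁅⁅x (v 0), x (v 1)⁆, x (v 2)⁆, x (v 3)⁆, x (v 4)⁆ ∈ W2 :=
  Submodule.subset_span (.inl ⟨Equiv.ofBijective v hv.bijective_of_finite, rfl⟩)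

theorem lie_lie_mul_lie_mem_W2 (v : Fin 5 → Fin 5) (hv : Function.Injective v) :
    ⁅⁅x (v 0), x (v 1)⁆, x (v 2)⁆ * ⁅x (v 3), x (v 4)⁆ ∈ W2 :=
  Submodule.subset_span (.inr ⟨Equiv.ofBijective v hv.bijective_of_finite, rfl⟩)

theorem bElt_mem_W2 (i : Idx) : bElt i ∈ W2 := by
  rcases i with τ | ⟨τ, -⟩ | ⟨τ, -⟩
  · exact lie_lie_lie_lie_mem_W2 (Fin.insertNth 0 (Fin.last 4) (Fin.castSucc ∘ τ))
      (Fin.insertNth_last_castSucc_injective 0 τ.injective)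
  · exact lie_lie_mul_lie_mem_W2 (Fin.insertNth 3 (Fin.last 4) (Fin.castSucc ∘ τ))
      (Fin.insertNth_last_castSucc_injective 3 τ.injective)
  · show ⁅e (τ 0), e (τ 1)⁆ * ⁅⁅x 4, e (τ 2)⁆, e (τ 3)⁆ ∈ W2
    rw [mul_eq_mul_add_lie, ← lie_skew ⁅e (τ 0), e (τ 1)⁆, lie_lie_right _ (e (τ 0))]
    refine add_mem ?_ (neg_mem (sub_mem ?_ ?_))
    · exact lie_lie_mul_lie_mem_W2 (Fin.insertNth 0 (Fin.last 4) (Fin.castSucc ∘ τ ∘ ![2, 3, 0, 1]))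
        (Fin.insertNth_last_castSucc_injective 0 (τ.injective.comp (by decide)))
    all_goals
      exact lie_lie_lie_lie_mem_W2 (Fin.insertNth 0 (Fin.last 4) (Fin.castSucc ∘ τ ∘ ![2, 3, _, _]))
        (Fin.insertNth_last_castSucc_injective 0 (τ.injective.comp (by decide)))

end Span

theorem span_range_bElt : Submodule.span ℤ (Set.range bElt) = W2 := by
  refine le_antisymm (Submodule.span_le.2 (Set.range_subset_iff.2 bElt_mem_W2)) ?_
  rw [W2, Submodule.span_le]
  rintro y (⟨σ, rfl⟩ | ⟨σ, rfl⟩)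
  exacts [lie_lie_lie_lie_mem σ, lie_lie_mul_lie_mem σ]

/-- `W₂` is free abelian with basis consisting of the elements `[x₅,x_{i₁},x_{i₂},x_{i₃},x_{i₄}]`;
`[x_{i₁},x_{i₂},x_{i₃}][x₅,x_{i₄}]` with `i₁ > i₂, i₃`; and `[x_{i₁},x_{i₂}][x₅,x_{i₃},x_{i₄}]`
with `i₁ > i₂`. -/
theorem stmt11 :
    ∃ b : Module.Basis Idx ℤ W2, ∀ i : Idx, (b i : R5) = bElt i :=
  ⟨(Module.Basis.span linearIndependent_bElt).map (LinearEquiv.ofEq _ _ span_range_bElt),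
    fun i => by
      rw [Module.Basis.map_apply, LinearEquiv.coe_ofEq_apply, Module.Basis.span_apply]⟩
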